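/- Let x = P(x) be an MPS in n variables with least fixed point 0 ≤ q* ≤ 1, and suppose v > 0 is a vector with B(q*)·v ≤ v, where B is the Jacobian of P. Consider rounded-down Newton's method with rounding parameter h ≥ 2 + ⌈log₂(v_max / (v_min · ε))⌉: x^{[0]} = 0 and x^{[k+1]} is obtained by rounding each coordinate of N_P(x^{[k]}) down to the nearest nonnegative multiple of 2^{−h}. If every iterate is defined and satisfies 0 ≤ x^{[k]} ≤ q* for all k, then after g ≥ h − 1 iterations, ‖q* − x^{[g]}‖_∞ ≤ ε. -/

import Mathlib

open Matrix MvPolynomial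

/-- Evaluation of a vector of multivariate polynomials. -/
noncomputable def evalVec {n : ℕ} (P : Fin n → MvPolynomial (Fin n) ℝ) (x : Fin n → ℝ) :
    Fin n → ℝ := fun i => MvPolynomial.eval x (P i)

/-- The Jacobian matrix B(x)_{ij} = ∂P_i/∂x_j evaluated at x. -/
noncomputable def jacob {n : ℕ} (P : Fin n → MvPolynomial (Fin n) ℝ) (x : Fin n → ℝ) :
    Matrix (Fin n) (Fin n) ℝ :=
  Matrix.of fun i j => MvPolynomial.eval x (MvPolynomial.pderiv j (P i))

/-- The exact Newton operator N_P(z) = z + (I - B(z))⁻¹ (P(z) - z). -/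
noncomputable def newtonOp {n : ℕ} (P : Fin n → MvPolynomial (Fin n) ℝ) (z : Fin n → ℝ) :
    Fin n → ℝ := z + (1 - jacob P z)⁻¹ *ᵥ (evalVec P z - z)

/-!
Along the segment from `z` to `q` a quadratic map restricts to a quadratic polynomial in one
variable, for which the trapezoid rule is exact: `2 (P q - P z) = (B z + B q)(q - z)`. With
`P q = q` this gives `q - N z = (I - B z)⁻¹ (½ (B q - B z)(q - z))`. Since `B` is monotone and
`B q v ≤ v`, the residual is at most `(I - B z)(t/2 • v)` whenever `q - z ≤ t • v`, and
`(I - B z)⁻¹` preserves nonnegativity because `B z ≥ 0` and `B z v ≤ v`, so an exact Newton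
step halves the error measured in units of `v`. In units of `u = v / v_min ≥ 1` rounding down
adds at most `2⁻ʰ`, so after `g` steps the error is at most
`(2⁻ᵍ + 2¹⁻ʰ) u ≤ 2²⁻ʰ v_max / v_min ≤ ε`.
-/

open Filter Topology

theorem Polynomial.two_mul_eval_one_sub_eval_zero_of_natDegree_le_two {R : Type*} [CommRing R]
    {F : Polynomial R} (hF : F.natDegree ≤ 2) :
    2 * (F.eval 1 - F.eval 0) = F.derivative.eval 0 + F.derivative.eval 1 := by
  have hd : F.derivative.natDegree < 2 := by
    have := Polynomial.natDegree_derivative_le F; omega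
  have h3 : F.natDegree < 3 := by omega
  rw [Polynomial.eval_eq_sum_range' h3, Polynomial.eval_eq_sum_range' h3,
    Polynomial.eval_eq_sum_range' hd, Polynomial.eval_eq_sum_range' hd]
  simp only [Finset.sum_range_succ, Finset.sum_range_zero, Polynomial.coeff_derivative]
  push_cast
  ring

namespace MvPolynomial
variable {R σ : Type*}

theorem eval_aeval_polynomial [CommSemiring R] (g : σ → Polynomial R) (p : MvPolynomial σ R)
    (s : R) :
    (aeval g p).eval s = eval (fun j => (g j).eval s) p := by
  rw [aeval_def, polynomial_eval_eval₂, eval]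
  congr
  ext
  simp

theorem derivative_aeval [CommSemiring R] [Fintype σ] [DecidableEq σ] (g : σ → Polynomial R)
    (p : MvPolynomial σ R) :
    Polynomial.derivative (aeval g p) =
      ∑ j, aeval g (pderiv j p) * Polynomial.derivative (g j) := by
  induction p using MvPolynomial.induction_on with
  | C a => simp
  | add p q hp hq => simp [hp, hq, ← Finset.sum_add_distrib, add_mul]
  | mul_X p i hp =>
    simp only [map_mul, aeval_X, Polynomial.derivative_mul, hp, pderiv_mul, pderiv_X,
      map_add, add_mul, Finset.sum_add_distrib, Finset.sum_mul]
    congr 1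
    · exact Finset.sum_congr rfl fun j _ => by ring
    · simp [Pi.single_apply]

theorem natDegree_aeval_le_totalDegree [CommSemiring R] {g : σ → Polynomial R}
    (hg : ∀ j, (g j).natDegree ≤ 1) (p : MvPolynomial σ R) :
    (aeval g p).natDegree ≤ p.totalDegree := by
  conv_lhs => rw [p.as_sum]
  rw [map_sum]
  refine Polynomial.natDegree_sum_le_of_forall_le _ _ fun m hm => ?_
  rw [aeval_monomial, Polynomial.algebraMap_eq]
  refine (Polynomial.natDegree_C_mul_le _ _).trans ((Polynomial.natDegree_prod_le _ _).trans ?_)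
  refine le_trans (Finset.sum_le_sum fun j _ => Polynomial.natDegree_pow_le.trans ?_)
    (le_totalDegree hm)
  simpa using Nat.mul_le_mul_left (m j) (hg j)

theorem two_mul_eval_sub_eval_of_totalDegree_le_two [CommRing R] [Fintype σ] [DecidableEq σ]
    {p : MvPolynomial σ R} (hp : p.totalDegree ≤ 2) (z y : σ → R) :
    2 * (eval y p - eval z p) =
      ∑ j, (eval z (pderiv j p) + eval y (pderiv j p)) * (y j - z j) := by
  set g : σ → Polynomial R := fun j =>
    Polynomial.C (z j) + Polynomial.C (y j - z j) * Polynomial.X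
  have hg : ∀ j, (g j).natDegree ≤ 1 := fun j =>
    (Polynomial.natDegree_add_le _ _).trans
      (max_le (by simp) ((Polynomial.natDegree_C_mul_le _ _).trans Polynomial.natDegree_X_le))
  have hline0 : (fun j => (g j).eval 0) = z := by funext j; simp [g]
  have hline1 : (fun j => (g j).eval 1) = y := by funext j; simp [g]
  have hderiv : ∀ s, (Polynomial.derivative (aeval g p)).eval s =
      ∑ j, eval (fun j => (g j).eval s) (pderiv j p) * (y j - z j) := by
    intro s
    simp [derivative_aeval, Polynomial.eval_finsetSum, eval_aeval_polynomial, g]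
  have := Polynomial.two_mul_eval_one_sub_eval_zero_of_natDegree_le_two
    ((natDegree_aeval_le_totalDegree hg p).trans hp)
  rw [hderiv, hderiv, eval_aeval_polynomial, eval_aeval_polynomial, hline0, hline1] at this
  rw [this, ← Finset.sum_add_distrib]
  exact Finset.sum_congr rfl fun j _ => by ring

variable [CommSemiring R] [PartialOrder R] [IsOrderedRing R] {p : MvPolynomial σ R}

theorem eval_le_eval_of_coeff_nonneg (hp : ∀ m, 0 ≤ p.coeff m) {a b : σ → R} (ha : 0 ≤ a)
    (hab : a ≤ b) : eval a p ≤ eval b p := by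
  rw [eval_eq, eval_eq]
  refine Finset.sum_le_sum fun m _ => mul_le_mul_of_nonneg_left ?_ (hp m)
  exact Finset.prod_le_prod (fun j _ => pow_nonneg (ha j) _)
    fun j _ => pow_le_pow_left₀ (ha j) (hab j) _

theorem eval_nonneg_of_coeff_nonneg (hp : ∀ m, 0 ≤ p.coeff m) {a : σ → R} (ha : 0 ≤ a) :
    0 ≤ eval a p := by
  rw [eval_eq]
  exact Finset.sum_nonneg fun m _ =>
    mul_nonneg (hp m) (Finset.prod_nonneg fun j _ => pow_nonneg (ha j) _)

theorem coeff_pderiv_nonneg [DecidableEq σ] (hp : ∀ m, 0 ≤ p.coeff m) (j : σ)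
    (m : σ →₀ ℕ) :
    0 ≤ (pderiv j p).coeff m := by
  rw [coeff_pderiv]
  exact mul_nonneg (hp _) (add_nonneg (Nat.cast_nonneg _) zero_le_one)

end MvPolynomial

namespace Matrix
variable {ι : Type*} [Fintype ι]

theorem mulVec_le_mulVec_of_nonneg {R : Type*} [Semiring R] [PartialOrder R] [IsOrderedRing R]
    {A : Matrix ι ι R} (hA : ∀ i j, 0 ≤ A i j) {x y : ι → R} (hxy : x ≤ y) :
    A *ᵥ x ≤ A *ᵥ y := fun i =>
  Finset.sum_le_sum fun j _ => mul_le_mul_of_nonneg_left (hxy j) (hA i j)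

theorem mulVec_le_mulVec_of_le {R : Type*} [Semiring R] [PartialOrder R] [IsOrderedRing R]
    {A B : Matrix ι ι R} (hAB : ∀ i j, A i j ≤ B i j) {x : ι → R} (hx : 0 ≤ x) :
    A *ᵥ x ≤ B *ᵥ x := fun i =>
  Finset.sum_le_sum fun j _ => mul_le_mul_of_nonneg_right (hAB i j) (hx j)

variable [DecidableEq ι]

theorem nonneg_of_nonneg_one_sub_mulVec {A : Matrix ι ι ℝ} (hA : ∀ i j, 0 ≤ A i j)
    {v : ι → ℝ} (hv : ∀ i, 0 < v i) (hAv : ∀ i, (A *ᵥ v) i < v i)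
    {x : ι → ℝ} (hx : 0 ≤ (1 - A) *ᵥ x) : 0 ≤ x := by
  -- At a minimiser `i₀` of `x i / v i`: `((1 - A) *ᵥ x) i₀ ≤ μ * (v - A *ᵥ v) i₀ < 0`.
  by_contra hneg
  obtain ⟨i₁, hi₁⟩ : ∃ i, x i < 0 := by simpa [Pi.le_def] using hneg
  have : Nonempty ι := ⟨i₁⟩
  obtain ⟨i₀, hmin⟩ := Finite.exists_min fun i => x i / v i
  set μ := x i₀ / v i₀
  have hμ : μ < 0 := (hmin i₁).trans_lt (div_neg_of_neg_of_pos hi₁ (hv i₁))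
  have hμv : μ • v ≤ x := fun j => by
    simpa [le_div_iff₀ (hv j)] using hmin j
  have hAx := mulVec_le_mulVec_of_nonneg hA hμv i₀
  have hxi₀ : x i₀ = μ * v i₀ := (div_mul_cancel₀ _ (hv i₀).ne').symm
  have := hx i₀
  simp only [sub_mulVec, one_mulVec, mulVec_smul, Pi.sub_apply, Pi.smul_apply, smul_eq_mul,
    Pi.zero_apply] at hAx this
  nlinarith [hAv i₀]

theorem inv_one_sub_mulVec_nonneg {A : Matrix ι ι ℝ} (hA : ∀ i j, 0 ≤ A i j)
    {v : ι → ℝ} (hv : ∀ i, 0 < v i) (hAv : A *ᵥ v ≤ v) (hdet : IsUnit (1 - A).det)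
    {w : ι → ℝ} (hw : 0 ≤ w) : 0 ≤ (1 - A)⁻¹ *ᵥ w := by
  -- For `s < 1` the matrix `s • A` satisfies the strict hypothesis above; let `s → 1`.
  set f : ℝ → ι → ℝ := fun s => (1 - s • A)⁻¹ *ᵥ w
  have hdet_cont : Continuous fun s : ℝ => (1 - s • A).det := by fun_prop
  have hinv : ContinuousAt (fun s : ℝ => (1 - s • A)⁻¹) 1 := by
    have hline : Continuous fun s : ℝ => 1 - s • A := by fun_prop
    refine ContinuousAt.comp (g := Inv.inv) ?_ hline.continuousAt
    rw [one_smul]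
    refine continuousAt_matrix_inv _ ?_
    simpa only [Ring.inverse_eq_inv'] using continuousAt_inv₀ hdet.ne_zero
  have hf : ContinuousAt f 1 :=
    (continuous_id.matrix_mulVec continuous_const).continuousAt.comp hinv
  have hunit : ∀ᶠ s in 𝓝[<] (1 : ℝ), (1 - s • A).det ≠ 0 := by
    refine nhdsWithin_le_nhds (hdet_cont.continuousAt.eventually_ne ?_)
    simpa using hdet.ne_zero
  have hf1 : f 1 = (1 - A)⁻¹ *ᵥ w := by simp [f]
  rw [← hf1]
  refine ge_of_tendsto (hf.tendsto.mono_left (nhdsWithin_le_nhds (s := Set.Iio 1))) ?_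
  filter_upwards [hunit, Ioo_mem_nhdsLT zero_lt_one] with s hs hs01
  refine nonneg_of_nonneg_one_sub_mulVec (A := s • A) (fun i j => mul_nonneg hs01.1.le (hA i j))
    hv (fun i => ?_) ?_
  · rw [smul_mulVec, Pi.smul_apply, smul_eq_mul]
    nlinarith [hAv i, hv i, hs01.1, hs01.2]
  · rw [mulVec_mulVec, mul_nonsing_inv _ (isUnit_iff_ne_zero.mpr hs), one_mulVec]
    exact hw

end Matrix

theorem sub_inv_le_inv_mul_floor_max {c : ℝ} (hc : 0 < c) (a : ℝ) :
    a - c⁻¹ ≤ c⁻¹ * ⌊max a 0 * c⌋ := by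
  rw [le_inv_mul_iff₀ hc, mul_sub, mul_inv_cancel₀ hc.ne']
  nlinarith [Int.sub_one_lt_floor (max a 0 * c), le_max_left a 0]

theorem le_smul_of_le_half_add {ι : Type*} {e : ℕ → ι → ℝ} {v : ι → ℝ} (hv : 0 ≤ v)
    {t₀ δ : ℝ} (ht₀ : 0 ≤ t₀) (hδ : 0 ≤ δ) (h₀ : e 0 ≤ t₀ • v)
    (hstep : ∀ k t, 0 ≤ t → e k ≤ t • v → e (k + 1) ≤ (t / 2 + δ) • v) (k : ℕ) :
    e k ≤ (t₀ / 2 ^ k + 2 * δ) • v := by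
  induction k with
  | zero => exact h₀.trans (smul_le_smul_of_nonneg_right (by simpa using hδ) hv)
  | succ k ih =>
    convert hstep k _ (by positivity) ih using 2
    rw [pow_succ]
    ring

theorem four_mul_le_two_pow_of_two_add_ceil_logb_le {r : ℝ} (hr : 0 < r) {h : ℕ}
    (hh : 2 + ⌈Real.logb 2 r⌉ ≤ (h : ℤ)) : 4 * r ≤ 2 ^ h := by
  have hlog : Real.logb 2 r ≤ (h : ℝ) - 2 := by
    have : ((2 + ⌈Real.logb 2 r⌉ : ℤ) : ℝ) ≤ h := by exact_mod_cast hh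
    push_cast at this
    linarith [Int.le_ceil (Real.logb 2 r)]
  have := (Real.logb_le_iff_le_rpow one_lt_two hr).mp hlog
  rw [Real.rpow_sub two_pos, Real.rpow_natCast] at this
  norm_num at this
  linarith

theorem one_div_two_pow_add_mul_le_of_ceil_logb_le {r ε : ℝ} (hr : 0 < r) (hε : 0 < ε)
    {g h : ℕ} (hg : h ≤ g + 1) (hh : 2 + ⌈Real.logb 2 (r / ε)⌉ ≤ (h : ℤ)) :
    (1 / 2 ^ g + 2 * ((2 : ℝ) ^ h)⁻¹) * r ≤ ε := by
  have h4 := four_mul_le_two_pow_of_two_add_ceil_logb_le (div_pos hr hε) hh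
  rw [mul_div_assoc', div_le_iff₀ hε] at h4
  have hpow : (2 : ℝ) ^ h ≤ 2 * 2 ^ g := by
    rw [← pow_succ']
    exact pow_le_pow_right₀ one_le_two hg
  calc (1 / 2 ^ g + 2 * ((2 : ℝ) ^ h)⁻¹) * r ≤ 4 / 2 ^ h * r := by
        gcongr
        field_simp
        linarith
    _ ≤ ε := by
      rw [div_mul_eq_mul_div, div_le_iff₀ (by positivity)]
      linarith

theorem Finite.lt_ciInf_of_forall_lt {ι α : Type*} [Finite ι] [Nonempty ι]
    [ConditionallyCompleteLinearOrder α] {f : ι → α} {a : α} (hf : ∀ i, a < f i) :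
    a < ⨅ i, f i := by
  obtain ⟨i, hi⟩ := exists_eq_ciInf_of_finite (f := f)
  exact (hf i).trans_eq hi

section Jacobian
variable {n : ℕ} {P : Fin n → MvPolynomial (Fin n) ℝ}

theorem jacob_nonneg (hpos : ∀ i m, 0 ≤ (P i).coeff m) {z : Fin n → ℝ} (hz : 0 ≤ z)
    (i j : Fin n) :
    0 ≤ jacob P z i j :=
  eval_nonneg_of_coeff_nonneg (coeff_pderiv_nonneg (hpos i) j) hz

theorem jacob_mono (hpos : ∀ i m, 0 ≤ (P i).coeff m) {z y : Fin n → ℝ} (hz : 0 ≤ z)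
    (hzy : z ≤ y) (i j : Fin n) : jacob P z i j ≤ jacob P y i j :=
  eval_le_eval_of_coeff_nonneg (coeff_pderiv_nonneg (hpos i) j) hz hzy

theorem two_smul_evalVec_sub_evalVec (hdeg : ∀ i, (P i).totalDegree ≤ 2) (z y : Fin n → ℝ) :
    (2 : ℝ) • (evalVec P y - evalVec P z) = (jacob P z + jacob P y) *ᵥ (y - z) := by
  funext i
  simp only [Pi.smul_apply, Pi.sub_apply, smul_eq_mul, evalVec,
    two_mul_eval_sub_eval_of_totalDegree_le_two (hdeg i), mulVec, dotProduct, jacob,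
    Matrix.add_apply, of_apply]

theorem sub_newtonOp_eq (hdeg : ∀ i, (P i).totalDegree ≤ 2) {q : Fin n → ℝ}
    (hfix : evalVec P q = q) (z : Fin n → ℝ) (hdet : IsUnit (1 - jacob P z).det) :
    q - newtonOp P z =
      (1 - jacob P z)⁻¹ *ᵥ ((1 / 2 : ℝ) • ((jacob P q - jacob P z) *ᵥ (q - z))) := by
  have htaylor := two_smul_evalVec_sub_evalVec hdeg z q
  rw [hfix] at htaylor
  have hres : evalVec P z - z =
      (1 - jacob P z) *ᵥ (q - z) - (1 / 2 : ℝ) • ((jacob P q - jacob P z) *ᵥ (q - z)) := by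
    simp only [sub_mulVec, add_mulVec, one_mulVec] at htaylor ⊢
    linear_combination (norm := module) (-(1 / 2 : ℝ)) • htaylor
  rw [newtonOp, hres, mulVec_sub, mulVec_mulVec, nonsing_inv_mul _ hdet, one_mulVec]
  abel

theorem sub_newtonOp_le (hdeg : ∀ i, (P i).totalDegree ≤ 2)
    (hpos : ∀ i m, 0 ≤ (P i).coeff m) {q : Fin n → ℝ} (hfix : evalVec P q = q)
    {v : Fin n → ℝ} (hv : ∀ i, 0 < v i) (hBv : jacob P q *ᵥ v ≤ v)
    {z : Fin n → ℝ} (hz : 0 ≤ z) (hzq : z ≤ q)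
    (hdet : IsUnit (1 - jacob P z).det) {t : ℝ} (ht : 0 ≤ t) (hzt : q - z ≤ t • v) :
    q - newtonOp P z ≤ (t / 2) • v := by
  set B := jacob P z
  set D := jacob P q - B
  have hB : ∀ i j, 0 ≤ B i j := jacob_nonneg hpos hz
  have hD : ∀ i j, 0 ≤ D i j := fun i j => sub_nonneg.mpr (jacob_mono hpos hz hzq i j)
  have hBv' : B *ᵥ v ≤ v :=
    (mulVec_le_mulVec_of_le (jacob_mono hpos hz hzq) fun i => (hv i).le).trans hBv
  have hDd := mulVec_le_mulVec_of_nonneg hD hzt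
  have hres : (1 / 2 : ℝ) • (D *ᵥ (q - z)) ≤ (1 - B) *ᵥ ((t / 2) • v) := fun i => by
    have := hDd i
    simp only [D, B, sub_mulVec, one_mulVec, mulVec_smul, Pi.sub_apply, Pi.smul_apply,
      smul_eq_mul] at this hBv ⊢
    nlinarith [hBv i]
  have hinv := inv_one_sub_mulVec_nonneg hB hv hBv' hdet (sub_nonneg.mpr hres)
  rw [mulVec_sub, mulVec_mulVec, nonsing_inv_mul _ hdet, one_mulVec,
    ← sub_newtonOp_eq hdeg hfix z hdet] at hinv
  exact sub_nonneg.mp hinv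

theorem sub_roundDown_newtonOp_le (hdeg : ∀ i, (P i).totalDegree ≤ 2)
    (hpos : ∀ i m, 0 ≤ (P i).coeff m) {q : Fin n → ℝ} (hfix : evalVec P q = q)
    {u : Fin n → ℝ} (hu : ∀ i, 1 ≤ u i) (hBu : jacob P q *ᵥ u ≤ u)
    {z : Fin n → ℝ} (hz : 0 ≤ z) (hzq : z ≤ q) (hdet : IsUnit (1 - jacob P z).det)
    {h : ℕ} {z' : Fin n → ℝ}
    (hz' : ∀ i, z' i = ((2 : ℝ) ^ h)⁻¹ * ⌊max (newtonOp P z i) 0 * 2 ^ h⌋)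
    {t : ℝ} (ht : 0 ≤ t) (hzt : q - z ≤ t • u) :
    q - z' ≤ (t / 2 + ((2 : ℝ) ^ h)⁻¹) • u := fun i => by
  have hN := sub_newtonOp_le hdeg hpos hfix (fun j => one_pos.trans_le (hu j)) hBu hz hzq hdet
    ht hzt i
  have hround := sub_inv_le_inv_mul_floor_max (pow_pos two_pos h) (newtonOp P z i)
  rw [← hz'] at hround
  have hδ : ((2 : ℝ) ^ h)⁻¹ ≤ ((2 : ℝ) ^ h)⁻¹ * u i :=
    le_mul_of_one_le_right (by positivity) (hu i)
  simp only [Pi.sub_apply, Pi.smul_apply, smul_eq_mul] at hN ⊢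
  linarith

end Jacobian

theorem stmt16_general {n : ℕ} (P : Fin n → MvPolynomial (Fin n) ℝ)
    (hdeg : ∀ i, (P i).totalDegree ≤ 2) (hpos : ∀ i m, 0 ≤ (P i).coeff m)
    (q : Fin n → ℝ) (hq1 : q ≤ 1) (hfix : evalVec P q = q)
    (v : Fin n → ℝ) (hv : ∀ i, 0 < v i) (hBv : jacob P q *ᵥ v ≤ v)
    (ε : ℝ) (hε0 : 0 < ε)
    (h : ℕ)
    (hh : (2 : ℤ) + ⌈Real.logb 2 ((⨆ i, v i) / ((⨅ i, v i) * ε))⌉ ≤ (h : ℤ))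
    (x : ℕ → Fin n → ℝ) (hx0 : x 0 = 0)
    (hdef : ∀ k, IsUnit (1 - jacob P (x k)).det)
    (hround : ∀ k i,
      x (k + 1) i = (2 : ℝ) ^ (-(h : ℤ)) * (⌊max (newtonOp P (x k) i) 0 * 2 ^ h⌋ : ℤ))
    (hbounds : ∀ k, 0 ≤ x k ∧ x k ≤ q) :
    ∀ g : ℕ, h - 1 ≤ g → ∀ i, |q i - x g i| ≤ ε := by
  intro g hg i
  have : Nonempty (Fin n) := ⟨i⟩
  set vmin := ⨅ j, v j
  set vmax := ⨆ j, v j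
  have hvmin : 0 < vmin := Finite.lt_ciInf_of_forall_lt hv
  set u := vmin⁻¹ • v
  have hu : ∀ j, 1 ≤ u j := fun j => by
    simpa [u, ← div_eq_inv_mul, one_le_div hvmin] using ciInf_le (Set.finite_range v).bddBelow j
  have hu_le : u i ≤ vmax / vmin := by
    simpa [u, ← div_eq_inv_mul] using
      div_le_div_of_nonneg_right (le_ciSup (Set.finite_range v).bddAbove i) hvmin.le
  have hBu : jacob P q *ᵥ u ≤ u := by
    rw [mulVec_smul]
    exact smul_le_smul_of_nonneg_left hBv (by positivity)
  simp only [_root_.zpow_neg, zpow_natCast] at hround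
  have herr := le_smul_of_le_half_add (fun j => zero_le_one.trans (hu j)) zero_le_one
    (by positivity) (fun j => by simpa [hx0] using (hq1 j).trans (hu j))
    (fun k t ht hk => sub_roundDown_newtonOp_le hdeg hpos hfix hu hBu (hbounds k).1 (hbounds k).2
      (hdef k) (hround k) ht hk) g i
  rw [abs_of_nonneg (sub_nonneg.2 ((hbounds g).2 i))]
  calc q i - x g i ≤ (1 / 2 ^ g + 2 * ((2 : ℝ) ^ h)⁻¹) * u i := by simpa using herr
    _ ≤ (1 / 2 ^ g + 2 * ((2 : ℝ) ^ h)⁻¹) * (vmax / vmin) := by gcongr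
    _ ≤ ε := one_div_two_pow_add_mul_le_of_ceil_logb_le
        (div_pos ((hv i).trans_le (le_ciSup (Set.finite_range v).bddAbove i)) hvmin) hε0
        (by omega) (by rwa [div_div])

theorem stmt16 {n : ℕ} (hn : 0 < n) (P : Fin n → MvPolynomial (Fin n) ℝ)
    (hdeg : ∀ i, (P i).totalDegree ≤ 2) (hpos : ∀ i m, 0 ≤ (P i).coeff m)
    (q : Fin n → ℝ) (hq0 : 0 ≤ q) (hq1 : q ≤ 1) (hfix : evalVec P q = q)
    (hleast : ∀ r : Fin n → ℝ, 0 ≤ r → evalVec P r = r → q ≤ r)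
    (v : Fin n → ℝ) (hv : ∀ i, 0 < v i) (hBv : jacob P q *ᵥ v ≤ v)
    (ε : ℝ) (hε0 : 0 < ε) (hε1 : ε < 1)
    (h : ℕ)
    (hh : (2 : ℤ) + ⌈Real.logb 2 ((⨆ i, v i) / ((⨅ i, v i) * ε))⌉ ≤ (h : ℤ))
    (x : ℕ → Fin n → ℝ) (hx0 : x 0 = 0)
    (hdef : ∀ k, IsUnit (1 - jacob P (x k)).det)
    (hround : ∀ k i,
      x (k + 1) i = (2 : ℝ) ^ (-(h : ℤ)) * (⌊max (newtonOp P (x k) i) 0 * 2 ^ h⌋ : ℤ))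
    (hbounds : ∀ k, 0 ≤ x k ∧ x k ≤ q) :
    ∀ g : ℕ, h - 1 ≤ g → ∀ i, |q i - x g i| ≤ ε :=
  stmt16_general P hdeg hpos q hq1 hfix v hv hBv ε hε0 h hh x hx0 hdef hround hbounds
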